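/- Let (X, ř) be a finite involutive non-degenerate set-theoretic solution and G = Σ_{x,y∈X} e_{τ_y(x),x} ⊗ e_{y,y}. Then G is invertible and G₂₁⁻¹ G₁₂ = Σ_{x,y∈X} e_{y,σ_x(y)} ⊗ e_{x,τ_y(x)} = r, where G₂₁ = P G₁₂ P. -/

import Mathlib

open Matrix

/-- Elementary matrix `e_{x,y}` with a single `1` in entry `(x,y)`. -/
noncomputable def eM {X : Type*} [DecidableEq X] (x y : X) : Matrix X X ℂ :=
  Matrix.single x y 1

/-- Kronecker (tensor) product of two `X × X` matrices, indexed by `X × X`. -/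
def kron2 {X : Type*} (A B : Matrix X X ℂ) : Matrix (X × X) (X × X) ℂ :=
  Matrix.of fun p q => A p.1 q.1 * B p.2 q.2

/-- The linearized set-theoretic solution `ř = Σ_{x,y} e_{x,σ_x(y)} ⊗ e_{y,τ_y(x)}`. -/
noncomputable def rcheckMat {X : Type*} [DecidableEq X] [Fintype X] (σ τ : X → X → X) :
    Matrix (X × X) (X × X) ℂ :=
  ∑ x : X, ∑ y : X, kron2 (eM x (σ x y)) (eM y (τ y x))

/-- The permutation operator `P = Σ_{x,y} e_{x,y} ⊗ e_{y,x}`. -/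
noncomputable def Pmat (X : Type*) [DecidableEq X] [Fintype X] :
    Matrix (X × X) (X × X) ℂ :=
  ∑ x : X, ∑ y : X, kron2 (eM x y) (eM y x)

/-- The set-theoretic map `ř(x,y) = (σ_x(y), τ_y(x))`. -/
def rFun {X : Type*} (σ τ : X → X → X) : X × X → X × X :=
  fun p => (σ p.1 p.2, τ p.2 p.1)

/-- `ř × id` acting on `X × X × X`. -/
def rFun12 {X : Type*} (σ τ : X → X → X) : X × X × X → X × X × X :=
  fun p => (σ p.1 p.2.1, τ p.2.1 p.1, p.2.2)

/-- `id × ř` acting on `X × X × X`. -/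
def rFun23 {X : Type*} (σ τ : X → X → X) : X × X × X → X × X × X :=
  fun p => (p.1, σ p.2.1 p.2.2, τ p.2.2 p.2.1)

/-!
Write `⟦f⟧` for the matrix with entry `[f p = q]` at `(p, q)`, so that `⟦f⟧ ⟦g⟧ = ⟦g ∘ f⟧`.
Then `G = ⟦T⁻¹⟧` for the bijection `T (x, y) = (τ_y x, y)` of `X × X`, and `P = ⟦S⟧` for the
flip `S`. The second half of involutivity, `τ_{τ_y x} (σ_x y) = y`, says exactly
`T ∘ ř = S ∘ T`. Hence `G₂₁⁻¹ G₁₂ = ⟦T⁻¹ ∘ S ∘ T ∘ S⟧ = ⟦ř ∘ S⟧ = P ř`.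
-/

open Equiv

namespace Matrix

variable {n R : Type*} [DecidableEq n]

theorem permMatrix_eq_submatrix_one [Zero R] [One R] (σ : Perm n) :
    σ.permMatrix R = (1 : Matrix n n R).submatrix σ id :=
  PEquiv.toMatrix_toPEquiv_eq σ

variable [Fintype n]

theorem isUnit_permMatrix [Semiring R] (σ : Perm n) : IsUnit (σ.permMatrix R) := by
  simpa using (Group.isUnit σ⁻¹).map (permMatrixHom (n := n) (R := R))

theorem inv_permMatrix [CommRing R] (σ : Perm n) : (σ.permMatrix R)⁻¹ = σ⁻¹.permMatrix R :=
  inv_eq_left_inv (by rw [← permMatrix_mul, mul_inv_cancel, permMatrix_one])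

theorem sum_single_eq_submatrix_one [AddCommMonoidWithOne R] (f : n → n) :
    ∑ i, single i (f i) (1 : R) = (1 : Matrix n n R).submatrix f id := by
  ext p q
  simp [sum_apply, single_apply, one_apply, ite_and]

theorem sum_single_eq_permMatrix_inv [AddCommMonoidWithOne R] (σ : Perm n) :
    ∑ i, single (σ i) i (1 : R) = σ⁻¹.permMatrix R := by
  rw [permMatrix_eq_submatrix_one, ← sum_single_eq_submatrix_one]
  exact Fintype.sum_equiv σ _ _ fun i => by simp

end Matrix

theorem kron2_eM_eM {X : Type*} [DecidableEq X] (a b c d : X) :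
    kron2 (eM a b) (eM c d) = single (a, c) (b, d) 1 := by
  ext p q
  simp only [kron2, eM, of_apply, single_apply, Prod.ext_iff]
  aesop

noncomputable def twistPerm {X : Type*} (τ : X → X → X) (hτ : ∀ y, Function.Bijective (τ y)) :
    Perm (X × X) :=
  prodCongrLeft fun y => ofBijective (τ y) (hτ y)

@[simp]
theorem twistPerm_apply {X : Type*} (τ : X → X → X) (hτ : ∀ y, Function.Bijective (τ y))
    (p : X × X) : twistPerm τ hτ p = (τ p.2 p.1, p.2) :=
  rfl

theorem twistPerm_rFun {X : Type*} {σ τ : X → X → X} (hτ : ∀ y, Function.Bijective (τ y))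
    (hinv : ∀ x y, τ (τ y x) (σ x y) = y) (p : X × X) :
    twistPerm τ hτ (rFun σ τ p) = (twistPerm τ hτ p).swap := by
  simp [rFun, hinv]

section TwistMatrices

variable {X : Type*} [DecidableEq X] [Fintype X]

theorem Pmat_eq_permMatrix : Pmat X = Perm.permMatrix ℂ (prodComm X X) := by
  rw [permMatrix_eq_submatrix_one, ← sum_single_eq_submatrix_one, Pmat,
    ← Fintype.sum_prod_type']
  simp [kron2_eM_eM, Prod.swap]

theorem rcheckMat_eq_submatrix_one (σ τ : X → X → X) :
    rcheckMat σ τ = (1 : Matrix (X × X) (X × X) ℂ).submatrix (rFun σ τ) id := by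
  rw [← sum_single_eq_submatrix_one, rcheckMat, ← Fintype.sum_prod_type']
  simp [kron2_eM_eM, rFun]

theorem sum_kron2_eq_submatrix_one_rFun_swap (σ τ : X → X → X) :
    ∑ x : X, ∑ y : X, kron2 (eM y (σ x y)) (eM x (τ y x))
      = (1 : Matrix (X × X) (X × X) ℂ).submatrix (rFun σ τ ∘ Prod.swap) id := by
  rw [← sum_single_eq_submatrix_one, Finset.sum_comm, ← Fintype.sum_prod_type']
  simp [kron2_eM_eM, rFun]

theorem sum_kron2_eq_permMatrix_twistPerm_inv (τ : X → X → X)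
    (hτ : ∀ y, Function.Bijective (τ y)) :
    ∑ x : X, ∑ y : X, kron2 (eM (τ y x) x) (eM y y) = (twistPerm τ hτ)⁻¹.permMatrix ℂ := by
  rw [← sum_single_eq_permMatrix_inv, ← Fintype.sum_prod_type']
  simp [kron2_eM_eM]

end TwistMatrices

theorem alt_twist_factorization_general {X : Type*} [DecidableEq X] [Fintype X] (σ τ : X → X → X)
    (hτ : ∀ y, Function.Bijective (τ y))
    (hinv : ∀ x y : X, σ (σ x y) (τ y x) = x ∧ τ (τ y x) (σ x y) = y) :
    IsUnit (∑ x : X, ∑ y : X, kron2 (eM (τ y x) x) (eM y y))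
    ∧ (Pmat X * (∑ x : X, ∑ y : X, kron2 (eM (τ y x) x) (eM y y)) * Pmat X)⁻¹
        * (∑ x : X, ∑ y : X, kron2 (eM (τ y x) x) (eM y y))
      = ∑ x : X, ∑ y : X, kron2 (eM y (σ x y)) (eM x (τ y x))
    ∧ Pmat X * rcheckMat σ τ
      = ∑ x : X, ∑ y : X, kron2 (eM y (σ x y)) (eM x (τ y x)) := by
  have hT := twistPerm_rFun hτ fun x y => (hinv x y).2
  rw [sum_kron2_eq_permMatrix_twistPerm_inv τ hτ, Pmat_eq_permMatrix,
    sum_kron2_eq_submatrix_one_rFun_swap, rcheckMat_eq_submatrix_one]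
  refine ⟨isUnit_permMatrix _, ?_, ?_⟩
  · rw [← permMatrix_mul, ← permMatrix_mul, inv_permMatrix, ← permMatrix_mul,
      permMatrix_eq_submatrix_one]
    congr 1
    ext p : 1
    apply (twistPerm τ hτ).injective
    simp only [Function.comp_apply, hT, _root_.mul_inv_rev, inv_inv, Perm.coe_mul, Perm.coe_inv,
      apply_symm_apply]
    rfl
  · rw [PEquiv.toMatrix_toPEquiv_mul, submatrix_submatrix]
    rfl

/-- The alternative twist `G = Σ_{x,y} e_{τ_y(x),x} ⊗ e_{y,y}` is invertible and
`G₂₁⁻¹ G₁₂ = Σ_{x,y} e_{y,σ_x(y)} ⊗ e_{x,τ_y(x)} = r = P ř`, with `G₂₁ = P G₁₂ P`. -/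
theorem alt_twist_factorization {X : Type*} [DecidableEq X] [Fintype X] (σ τ : X → X → X)
    (hσ : ∀ x, Function.Bijective (σ x))
    (hτ : ∀ y, Function.Bijective (τ y))
    (hinv : ∀ x y : X, σ (σ x y) (τ y x) = x ∧ τ (τ y x) (σ x y) = y) :
    IsUnit (∑ x : X, ∑ y : X, kron2 (eM (τ y x) x) (eM y y))
    ∧ (Pmat X * (∑ x : X, ∑ y : X, kron2 (eM (τ y x) x) (eM y y)) * Pmat X)⁻¹
        * (∑ x : X, ∑ y : X, kron2 (eM (τ y x) x) (eM y y))
      = ∑ x : X, ∑ y : X, kron2 (eM y (σ x y)) (eM x (τ y x))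
    ∧ Pmat X * rcheckMat σ τ
      = ∑ x : X, ∑ y : X, kron2 (eM y (σ x y)) (eM x (τ y x)) :=
  alt_twist_factorization_general σ τ hτ hinv
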